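/- For the binary random walk B^{H,n}, the increments satisfy the variance bound E[(B^{H,n}_t − B^{H,n}_s)²] ≤ |⌊nt⌋/n − ⌊ns⌋/n|^{2H} for all s,t ∈ [0,1]. -/

import Mathlib

open MeasureTheory ProbabilityTheory intervalIntegral
open scoped ENNReal

/-!
With `a = ⌊nt⌋/n`, `c = ⌊ns⌋/n` and `w = z a - z c`, the kernel vanishes beyond its first
argument, so the increment is `∑_{i ≤ n} √n (∫_{(i-1)/n}^{i/n} w) ξ_i`. The `ξ_i` are orthonormal
in `L²(P)`, so its second moment is `∑_i n (∫_{(i-1)/n}^{i/n} w)²`; Cauchy–Schwarz on each cell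
bounds this by `∫_0^1 w²`, and the covariance identity of `z` evaluates that as `|a - c|^{2H}`.
-/

noncomputable def bernPM : Measure ℝ :=
  (1 / 2 : ℝ≥0∞) • Measure.dirac 1 + (1 / 2 : ℝ≥0∞) • Measure.dirac (-1)

lemma integral_id_bernPM : ∫ x, x ∂bernPM = 0 := by
  have hint : ∀ a : ℝ, Integrable (fun x : ℝ => x) ((1 / 2 : ℝ≥0∞) • Measure.dirac a) :=
    fun a => (integrable_dirac enorm_lt_top).smul_measure (by simp)
  rw [bernPM, integral_add_measure (hint 1) (hint (-1))]
  simp [MeasureTheory.integral_smul_measure]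

section Rademacher

variable {Ω : Type*} [MeasurableSpace Ω] {P : Measure Ω}

lemma ae_eq_one_or_neg_one_of_map_eq_bernPM {X : Ω → ℝ} (hX : Measurable X)
    (hmap : P.map X = bernPM) : ∀ᵐ ω ∂P, X ω = 1 ∨ X ω = -1 := by
  have hpm : MeasurableSet ({1, -1} : Set ℝ) := by measurability
  have hnull : P.map X {1, -1}ᶜ = 0 := by
    simp [hmap, bernPM, Measure.dirac_apply' _ hpm.compl]
  rw [Measure.map_apply hX hpm.compl] at hnull
  filter_upwards [measure_eq_zero_iff_ae_notMem.1 hnull] with ω hω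
  simpa [or_iff_not_imp_left] using hω

lemma integral_eq_zero_of_map_eq_bernPM {X : Ω → ℝ} (hX : Measurable X)
    (hmap : P.map X = bernPM) : ∫ ω, X ω ∂P = 0 := by
  rw [← integral_id_bernPM, ← hmap]
  exact (integral_map hX.aemeasurable aestronglyMeasurable_id).symm

lemma integral_mul_self_eq_one_of_map_eq_bernPM [IsProbabilityMeasure P] {X : Ω → ℝ}
    (hX : Measurable X) (hmap : P.map X = bernPM) : ∫ ω, X ω * X ω ∂P = 1 := by
  have hsq : ∀ᵐ ω ∂P, X ω * X ω = 1 := by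
    filter_upwards [ae_eq_one_or_neg_one_of_map_eq_bernPM hX hmap] with ω h
    rcases h with h | h <;> simp [h]
  simp [integral_congr_ae hsq]

lemma integrable_mul_of_map_eq_bernPM [IsFiniteMeasure P] {X Y : Ω → ℝ}
    (hX : Measurable X) (hXmap : P.map X = bernPM)
    (hY : Measurable Y) (hYmap : P.map Y = bernPM) : Integrable (fun ω => X ω * Y ω) P := by
  refine .of_bound (hX.mul hY).aestronglyMeasurable 1 ?_
  filter_upwards [ae_eq_one_or_neg_one_of_map_eq_bernPM hX hXmap,
    ae_eq_one_or_neg_one_of_map_eq_bernPM hY hYmap] with ω hx hy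
  rcases hx with hx | hx <;> rcases hy with hy | hy <;> simp [hx, hy]

lemma integral_sq_sum_mul_of_orthonormal {ι : Type*} (s : Finset ι) (c : ι → ℝ)
    {X : ι → Ω → ℝ} (hint : ∀ i j, Integrable (fun ω => X i ω * X j ω) P)
    (hnorm : ∀ i, ∫ ω, X i ω * X i ω ∂P = 1)
    (horth : ∀ i j, i ≠ j → ∫ ω, X i ω * X j ω ∂P = 0) :
    ∫ ω, (∑ i ∈ s, c i * X i ω) ^ 2 ∂P = ∑ i ∈ s, c i ^ 2 := by
  have hexpand : ∀ ω, (∑ i ∈ s, c i * X i ω) ^ 2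
      = ∑ i ∈ s, ∑ j ∈ s, c i * c j * (X i ω * X j ω) := fun ω => by
    rw [sq, Finset.sum_mul_sum]
    exact Finset.sum_congr rfl fun i _ => Finset.sum_congr rfl fun j _ => by ring
  simp_rw [hexpand]
  rw [integral_finsetSum _ fun i _ => integrable_finsetSum _ fun j _ => (hint i j).const_mul _]
  refine Finset.sum_congr rfl fun i hi => ?_
  rw [integral_finsetSum _ fun j _ => (hint i j).const_mul _,
    Finset.sum_eq_single_of_mem i hi fun j _ hji => by
      rw [MeasureTheory.integral_const_mul, horth i j hji.symm, mul_zero],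
    MeasureTheory.integral_const_mul, hnorm, mul_one, sq]

lemma integral_sq_sum_mul_of_iIndepFun_bernPM [IsProbabilityMeasure P] {ι : Type*}
    (s : Finset ι) (c : ι → ℝ) {ξ : ι → Ω → ℝ} (hmeas : ∀ i, Measurable (ξ i))
    (hindep : iIndepFun ξ P) (hdist : ∀ i, P.map (ξ i) = bernPM) :
    ∫ ω, (∑ i ∈ s, c i * ξ i ω) ^ 2 ∂P = ∑ i ∈ s, c i ^ 2 := by
  refine integral_sq_sum_mul_of_orthonormal s c
    (fun i j => integrable_mul_of_map_eq_bernPM (hmeas i) (hdist i) (hmeas j) (hdist j))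
    (fun i => integral_mul_self_eq_one_of_map_eq_bernPM (hmeas i) (hdist i)) fun i j hij => ?_
  rw [← Pi.mul_def, (hindep.indepFun hij).integral_mul_eq_mul_integral
    (hmeas i).aestronglyMeasurable (hmeas j).aestronglyMeasurable,
    integral_eq_zero_of_map_eq_bernPM (hmeas i) (hdist i), zero_mul]

end Rademacher

namespace IntervalIntegrable

variable {f g : ℝ → ℝ} {a b : ℝ}

lemma of_sq (hf : Measurable f) (hf2 : IntervalIntegrable (fun u => f u ^ 2) volume a b) :
    IntervalIntegrable f volume a b :=
  (hf2.add (intervalIntegrable_const (c := (1 : ℝ)))).mono_fun' hf.aestronglyMeasurable <|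
    ae_of_all _ fun u => by
      dsimp only
      rw [Real.norm_eq_abs]
      nlinarith [sq_nonneg (|f u| - 1), sq_abs (f u)]

lemma mul_of_sq (hf : Measurable f) (hg : Measurable g)
    (hf2 : IntervalIntegrable (fun u => f u ^ 2) volume a b)
    (hg2 : IntervalIntegrable (fun u => g u ^ 2) volume a b) :
    IntervalIntegrable (fun u => f u * g u) volume a b :=
  (hf2.add hg2).mono_fun' (hf.mul hg).aestronglyMeasurable <| ae_of_all _ fun u => by
    dsimp only
    rw [Real.norm_eq_abs, abs_mul]
    nlinarith [sq_nonneg (|f u| - |g u|), sq_abs (f u), sq_abs (g u)]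

lemma sub_sq_of_sq (hf : Measurable f) (hg : Measurable g)
    (hf2 : IntervalIntegrable (fun u => f u ^ 2) volume a b)
    (hg2 : IntervalIntegrable (fun u => g u ^ 2) volume a b) :
    IntervalIntegrable (fun u => (f u - g u) ^ 2) volume a b :=
  ((hf2.add hg2).const_mul 2).mono_fun' ((hf.sub hg).pow_const 2).aestronglyMeasurable <|
    ae_of_all _ fun u => by
      dsimp only
      rw [Real.norm_eq_abs, abs_of_nonneg (sq_nonneg _)]
      nlinarith [sq_nonneg (f u + g u)]

end IntervalIntegrable

lemma intervalIntegral_sub_sq {f g : ℝ → ℝ} {a b : ℝ}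
    (hf2 : IntervalIntegrable (fun u => f u ^ 2) volume a b)
    (hg2 : IntervalIntegrable (fun u => g u ^ 2) volume a b)
    (hfg : IntervalIntegrable (fun u => f u * g u) volume a b) :
    ∫ u in a..b, (f u - g u) ^ 2
      = (∫ u in a..b, f u ^ 2) - 2 * (∫ u in a..b, f u * g u) + ∫ u in a..b, g u ^ 2 := by
  simp_rw [sub_sq, mul_assoc]
  rw [integral_add (hf2.sub (hfg.const_mul 2)) hg2, integral_sub hf2 (hfg.const_mul 2),
    intervalIntegral.integral_const_mul]

lemma sq_intervalIntegral_le_mul {f : ℝ → ℝ} {a b : ℝ} (hab : a ≤ b)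
    (hf : IntervalIntegrable f volume a b)
    (hf2 : IntervalIntegrable (fun u => f u ^ 2) volume a b) :
    (∫ u in a..b, f u) ^ 2 ≤ (b - a) * ∫ u in a..b, f u ^ 2 := by
  set I := ∫ u in a..b, f u
  set J := ∫ u in a..b, f u ^ 2
  -- Integrate `0 ≤ ((b - a) f - I)²`.
  have hexpand : ∫ u in a..b, ((b - a) * f u - I) ^ 2 = (b - a) * ((b - a) * J - I ^ 2) := by
    have hpoly : ∀ u, ((b - a) * f u - I) ^ 2
        = (b - a) ^ 2 * f u ^ 2 - 2 * (b - a) * I * f u + I ^ 2 := fun u => by ring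
    simp_rw [hpoly]
    rw [integral_add ((hf2.const_mul _).sub (hf.const_mul _)) intervalIntegrable_const,
      integral_sub (hf2.const_mul _) (hf.const_mul _), intervalIntegral.integral_const_mul,
      intervalIntegral.integral_const_mul, intervalIntegral.integral_const, smul_eq_mul]
    ring
  have hnonneg : 0 ≤ (b - a) * ((b - a) * J - I ^ 2) :=
    hexpand ▸ integral_nonneg hab fun u _ => sq_nonneg _
  rcases hab.eq_or_lt with rfl | hlt
  · simp [I]
  · nlinarith [sub_pos.2 hlt]

lemma uIcc_sub_one_div_subset_unitInterval {n i : ℕ} (hi : i ∈ Finset.Icc 1 n) :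
    Set.uIcc (((i : ℝ) - 1) / n) ((i : ℝ) / n) ⊆ Set.uIcc 0 1 := by
  obtain ⟨hi1, hin⟩ := Finset.mem_Icc.1 hi
  have hn : (0 : ℝ) < n := by exact_mod_cast hi1.trans hin
  have hi1' : (1 : ℝ) ≤ i := by exact_mod_cast hi1
  have hin' : (i : ℝ) ≤ n := by exact_mod_cast hin
  rw [Set.uIcc_of_le (by gcongr; linarith), Set.uIcc_of_le zero_le_one]
  exact Set.Icc_subset_Icc (by positivity) ((div_le_one hn).2 hin')

lemma sum_sq_intervalIntegral_partition_le {f : ℝ → ℝ} (n : ℕ) (hf : Measurable f)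
    (hf2 : IntervalIntegrable (fun u => f u ^ 2) volume 0 1) :
    ∑ i ∈ Finset.Icc 1 n, (√n * ∫ u in ((i : ℝ) - 1) / n..(i : ℝ) / n, f u) ^ 2
      ≤ ∫ u in (0 : ℝ)..1, f u ^ 2 := by
  rcases n.eq_zero_or_pos with rfl | hn
  · simpa using integral_nonneg zero_le_one fun u _ => sq_nonneg (f u)
  have hn' : (0 : ℝ) < n := by exact_mod_cast hn
  have hcell : ∀ i ∈ Finset.Icc 1 n, (√n * ∫ u in ((i : ℝ) - 1) / n..(i : ℝ) / n, f u) ^ 2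
      ≤ ∫ u in ((i : ℝ) - 1) / n..(i : ℝ) / n, f u ^ 2 := fun i hi => by
    have hsub := uIcc_sub_one_div_subset_unitInterval hi
    have hcs := sq_intervalIntegral_le_mul (by gcongr; linarith)
      ((hf2.mono_set hsub).of_sq hf) (hf2.mono_set hsub)
    rw [mul_pow, Real.sq_sqrt hn'.le]
    calc _ ≤ (n : ℝ) * (((i : ℝ) / n - ((i : ℝ) - 1) / n) * _) := by gcongr
      _ = _ := by field_simp; ring
  have hsum : ∑ i ∈ Finset.Icc 1 n, ∫ u in ((i : ℝ) - 1) / n..(i : ℝ) / n, f u ^ 2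
      = ∫ u in (0 : ℝ)..1, f u ^ 2 := by
    have htel := sum_integral_adjacent_intervals_Ico (a := fun k : ℕ => ((k : ℝ) - 1) / n)
      (f := fun u => f u ^ 2) (μ := volume) (Nat.le_add_left 1 n) fun k hk => by
        refine hf2.mono_set ?_
        simpa using uIcc_sub_one_div_subset_unitInterval
          (Finset.mem_Icc.2 ⟨hk.1, Nat.lt_succ_iff.1 hk.2⟩)
    simp only [Nat.cast_add, Nat.cast_one, add_sub_cancel_right, sub_self, zero_div,
      div_self hn'.ne', Finset.Ico_add_one_right_eq_Icc] at htel
    exact htel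
  exact (Finset.sum_le_sum hcell).trans hsum.le

lemma intervalIntegral_sq_sub_eq_rpow_of_covariance {z : ℝ → ℝ → ℝ} {H : ℝ} (hH : H ≠ 0)
    (hzm : ∀ a, Measurable (z a))
    (hzsq : ∀ a ∈ Set.Icc (0 : ℝ) 1, IntervalIntegrable (fun u => (z a u) ^ 2) volume 0 1)
    (hzcov : ∀ a ∈ Set.Icc (0 : ℝ) 1, ∀ c ∈ Set.Icc (0 : ℝ) 1,
      ∫ u in (0 : ℝ)..1, z a u * z c u = (a ^ (2 * H) + c ^ (2 * H) - |a - c| ^ (2 * H)) / 2)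
    {a c : ℝ} (ha : a ∈ Set.Icc (0 : ℝ) 1) (hc : c ∈ Set.Icc (0 : ℝ) 1) :
    ∫ u in (0 : ℝ)..1, (z a u - z c u) ^ 2 = |a - c| ^ (2 * H) := by
  have hvar : ∀ x ∈ Set.Icc (0 : ℝ) 1, ∫ u in (0 : ℝ)..1, z x u ^ 2 = x ^ (2 * H) := by
    intro x hx
    simp_rw [sq]
    rw [hzcov x hx x hx, sub_self, abs_zero, Real.zero_rpow (mul_ne_zero two_ne_zero hH)]
    ring
  rw [intervalIntegral_sub_sq (hzsq a ha) (hzsq c hc)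
    ((hzsq a ha).mul_of_sq (hzm a) (hzm c) (hzsq c hc)), hvar a ha, hvar c hc, hzcov a ha c hc]
  ring

lemma floor_mul_le_of_le_one {n : ℕ} {r : ℝ} (hr : r ≤ 1) : ⌊(n : ℝ) * r⌋₊ ≤ n :=
  Nat.floor_le_of_le (mul_le_of_le_one_right n.cast_nonneg hr)

lemma floor_mul_div_mem_unitInterval {n : ℕ} {r : ℝ} (hr : r ≤ 1) :
    (⌊(n : ℝ) * r⌋₊ : ℝ) / n ∈ Set.Icc (0 : ℝ) 1 :=
  ⟨by positivity, div_le_one_of_le₀ (by exact_mod_cast floor_mul_le_of_le_one hr) n.cast_nonneg⟩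

section BinaryWalk

variable {Ω : Type*} {n : ℕ} {z : ℝ → ℝ → ℝ} {b : ℝ → ℕ → ℝ} {ξ : ℕ → Ω → ℝ} {B : ℝ → Ω → ℝ}

lemma intervalIntegral_kernel_eq_zero (hzsupp : ∀ a u : ℝ, a < u → z a u = 0) {k i : ℕ}
    (hki : k < i) : ∫ u in ((i : ℝ) - 1) / n..(i : ℝ) / n, z ((k : ℝ) / n) u = 0 := by
  have hki' : (k : ℝ) ≤ i - 1 := by
    have : (k : ℝ) + 1 ≤ i := by exact_mod_cast hki
    linarith
  refine integral_zero_ae <| ae_of_all _ fun u hu => hzsupp _ _ ?_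
  rw [Set.uIoc_of_le (by gcongr; linarith)] at hu
  exact (div_le_div_of_nonneg_right hki' n.cast_nonneg).trans_lt hu.1

lemma walk_eq_sum_Icc (hzsupp : ∀ a u : ℝ, a < u → z a u = 0)
    (hb : ∀ (t : ℝ) (i : ℕ), b t i = Real.sqrt n * ∫ u in (((i : ℝ) - 1) / n)..((i : ℝ) / n),
        z ((⌊(n : ℝ) * t⌋₊ : ℝ) / n) u)
    (hB : ∀ (t : ℝ) (ω : Ω), B t ω = ∑ i ∈ Finset.Icc 1 ⌊(n : ℝ) * t⌋₊, b t i * ξ i ω)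
    {r : ℝ} (hr : r ≤ 1) (ω : Ω) : B r ω = ∑ i ∈ Finset.Icc 1 n, b r i * ξ i ω := by
  rw [hB]
  refine Finset.sum_subset (Finset.Icc_subset_Icc_right (floor_mul_le_of_le_one hr)) ?_
  intro i hin hi
  rw [hb, intervalIntegral_kernel_eq_zero hzsupp, mul_zero, zero_mul]
  simp only [Finset.mem_Icc, not_and, not_le] at hi
  exact hi (Finset.mem_Icc.1 hin).1

lemma walk_sub_eq_sum (hzsupp : ∀ a u : ℝ, a < u → z a u = 0)
    (hz : ∀ a ∈ Set.Icc (0 : ℝ) 1, IntervalIntegrable (z a) volume 0 1)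
    (hb : ∀ (t : ℝ) (i : ℕ), b t i = Real.sqrt n * ∫ u in (((i : ℝ) - 1) / n)..((i : ℝ) / n),
        z ((⌊(n : ℝ) * t⌋₊ : ℝ) / n) u)
    (hB : ∀ (t : ℝ) (ω : Ω), B t ω = ∑ i ∈ Finset.Icc 1 ⌊(n : ℝ) * t⌋₊, b t i * ξ i ω)
    {s t : ℝ} (hs : s ≤ 1) (ht : t ≤ 1) (ω : Ω) :
    B t ω - B s ω = ∑ i ∈ Finset.Icc 1 n, (√n * ∫ u in ((i : ℝ) - 1) / n..(i : ℝ) / n,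
      (z ((⌊(n : ℝ) * t⌋₊ : ℝ) / n) u - z ((⌊(n : ℝ) * s⌋₊ : ℝ) / n) u)) * ξ i ω := by
  rw [walk_eq_sum_Icc hzsupp hb hB ht, walk_eq_sum_Icc hzsupp hb hB hs, ← Finset.sum_sub_distrib]
  refine Finset.sum_congr rfl fun i hi => ?_
  have hsub := uIcc_sub_one_div_subset_unitInterval hi
  rw [hb, hb, integral_sub ((hz _ (floor_mul_div_mem_unitInterval ht)).mono_set hsub)
    ((hz _ (floor_mul_div_mem_unitInterval hs)).mono_set hsub)]
  ring

end BinaryWalk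

theorem stmt13_general {Ω : Type*} [MeasurableSpace Ω] (P : Measure Ω) [IsProbabilityMeasure P]
    (H : ℝ) (hH : H ∈ Set.Ioo (1 / 2 : ℝ) 1) (n : ℕ)
    (ξ : ℕ → Ω → ℝ) (hmeas : ∀ i, Measurable (ξ i))
    (hindep : iIndepFun ξ P)
    (hdist : ∀ i, Measure.map (ξ i) P = bernPM)
    (z : ℝ → ℝ → ℝ) (hzm : ∀ a, Measurable (z a))
    (hzsq : ∀ a ∈ Set.Icc (0 : ℝ) 1, IntervalIntegrable (fun u => (z a u) ^ 2) volume 0 1)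
    (hzsupp : ∀ a u : ℝ, a < u → z a u = 0)
    (hzcov : ∀ a ∈ Set.Icc (0 : ℝ) 1, ∀ c ∈ Set.Icc (0 : ℝ) 1,
      ∫ u in (0 : ℝ)..1, z a u * z c u
        = (a ^ (2 * H) + c ^ (2 * H) - |a - c| ^ (2 * H)) / 2)
    (b : ℝ → ℕ → ℝ)
    (hb : ∀ (t : ℝ) (i : ℕ),
      b t i = Real.sqrt n * ∫ u in (((i : ℝ) - 1) / n)..((i : ℝ) / n),
        z ((⌊(n : ℝ) * t⌋₊ : ℝ) / n) u)
    (B : ℝ → Ω → ℝ)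
    (hB : ∀ (t : ℝ) (ω : Ω), B t ω = ∑ i ∈ Finset.Icc 1 ⌊(n : ℝ) * t⌋₊, b t i * ξ i ω)
    (s t : ℝ) (hs : s ∈ Set.Icc (0 : ℝ) 1) (ht : t ∈ Set.Icc (0 : ℝ) 1) :
    ∫ ω, (B t ω - B s ω) ^ 2 ∂P
      ≤ |(⌊(n : ℝ) * t⌋₊ : ℝ) / n - (⌊(n : ℝ) * s⌋₊ : ℝ) / n| ^ (2 * H) := by
  set a := (⌊(n : ℝ) * t⌋₊ : ℝ) / n
  set c := (⌊(n : ℝ) * s⌋₊ : ℝ) / n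
  have ha : a ∈ Set.Icc (0 : ℝ) 1 := floor_mul_div_mem_unitInterval ht.2
  have hc : c ∈ Set.Icc (0 : ℝ) 1 := floor_mul_div_mem_unitInterval hs.2
  have hz : ∀ x ∈ Set.Icc (0 : ℝ) 1, IntervalIntegrable (z x) volume 0 1 :=
    fun x hx => (hzsq x hx).of_sq (hzm x)
  calc ∫ ω, (B t ω - B s ω) ^ 2 ∂P
      = ∑ i ∈ Finset.Icc 1 n,
          (√n * ∫ u in ((i : ℝ) - 1) / n..(i : ℝ) / n, (z a u - z c u)) ^ 2 := by
        simp_rw [walk_sub_eq_sum hzsupp hz hb hB hs.2 ht.2]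
        exact integral_sq_sum_mul_of_iIndepFun_bernPM _ _ hmeas hindep hdist
    _ ≤ ∫ u in (0 : ℝ)..1, (z a u - z c u) ^ 2 :=
        sum_sq_intervalIntegral_partition_le n ((hzm a).sub (hzm c))
          ((hzsq a ha).sub_sq_of_sq (hzm a) (hzm c) (hzsq c hc))
    _ = |a - c| ^ (2 * H) := intervalIntegral_sq_sub_eq_rpow_of_covariance
        (by linarith [hH.1] : 0 < H).ne' hzm hzsq hzcov ha hc

/-- For the disturbed binary random walk
`B^{H,n}_t = Σ_{i=1}^{⌊nt⌋} b^n_{t,i} ξ^n_i`, built from i.i.d. symmetric ±1 variables and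
the Molchan–Golosov kernel `z` (whose `L²` products realize the fractional covariance),
the increments satisfy `E[(B^{H,n}_t − B^{H,n}_s)²] ≤ |⌊nt⌋/n − ⌊ns⌋/n|^{2H}`. -/
theorem stmt13 {Ω : Type*} [MeasurableSpace Ω] (P : Measure Ω) [IsProbabilityMeasure P]
    (H : ℝ) (hH : H ∈ Set.Ioo (1 / 2 : ℝ) 1) (n : ℕ) (hn : 1 ≤ n)
    (ξ : ℕ → Ω → ℝ) (hmeas : ∀ i, Measurable (ξ i))
    (hindep : iIndepFun ξ P)
    (hdist : ∀ i, Measure.map (ξ i) P = bernPM)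
    (z : ℝ → ℝ → ℝ) (hzm : ∀ a, Measurable (z a))
    (hzsq : ∀ a ∈ Set.Icc (0 : ℝ) 1, IntervalIntegrable (fun u => (z a u) ^ 2) volume 0 1)
    (hzsupp : ∀ a u : ℝ, a < u → z a u = 0)
    (hzcov : ∀ a ∈ Set.Icc (0 : ℝ) 1, ∀ c ∈ Set.Icc (0 : ℝ) 1,
      ∫ u in (0 : ℝ)..1, z a u * z c u
        = (a ^ (2 * H) + c ^ (2 * H) - |a - c| ^ (2 * H)) / 2)
    (b : ℝ → ℕ → ℝ)
    (hb : ∀ (t : ℝ) (i : ℕ),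
      b t i = Real.sqrt n * ∫ u in (((i : ℝ) - 1) / n)..((i : ℝ) / n),
        z ((⌊(n : ℝ) * t⌋₊ : ℝ) / n) u)
    (B : ℝ → Ω → ℝ)
    (hB : ∀ (t : ℝ) (ω : Ω), B t ω = ∑ i ∈ Finset.Icc 1 ⌊(n : ℝ) * t⌋₊, b t i * ξ i ω)
    (s t : ℝ) (hs : s ∈ Set.Icc (0 : ℝ) 1) (ht : t ∈ Set.Icc (0 : ℝ) 1) :
    ∫ ω, (B t ω - B s ω) ^ 2 ∂P
      ≤ |(⌊(n : ℝ) * t⌋₊ : ℝ) / n - (⌊(n : ℝ) * s⌋₊ : ℝ) / n| ^ (2 * H) :=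
  stmt13_general P H hH n ξ hmeas hindep hdist z hzm hzsq hzsupp hzcov b hb B hB s t hs ht
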